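/- The identity 1/9 = ∑_{i=0}^{∞} 1/((2i+1)(2i+5)(2i+3)²) + 2∑_{i=1}^{∞} 1/((2i−1)²(2i+3)²) holds. -/

import Mathlib

/-!
The combined summand `a n + 2 b n` telescopes: it equals `g n - g (n + 1)` for
`g n = (n + 1) / ((2n + 1)² (2n + 3)²)`, so the series sums to `g 0 - lim g = 1/9 - 0`.
Both series have nonnegative terms dominated by the combined summand, hence converge
separately, and the sum splits.
-/

open Filter Topology Finset

theorem hasSum_sub_succ_of_antitone {f : ℕ → ℝ} {l : ℝ} (hf : Antitone f)
    (hl : Tendsto f atTop (𝓝 l)) : HasSum (fun n ↦ f n - f (n + 1)) (f 0 - l) := by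
  rw [hasSum_iff_tendsto_nat_of_nonneg fun n ↦ sub_nonneg.2 (hf n.le_succ)]
  simpa only [sum_range_sub'] using tendsto_const_nhds.sub hl

namespace Stmt13

noncomputable def firstTerm (n : ℕ) : ℝ :=
  1 / ((2 * (n : ℝ) + 1) * (2 * n + 5) * (2 * n + 3) ^ 2)

noncomputable def secondTerm (n : ℕ) : ℝ :=
  1 / ((2 * (n + 1 : ℝ) - 1) ^ 2 * (2 * (n + 1 : ℝ) + 3) ^ 2)

/-- The tail `∑_{k ≥ n} (firstTerm k + 2 * secondTerm k)`, i.e. the truncation error. -/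
noncomputable def tail (n : ℕ) : ℝ :=
  ((n : ℝ) + 1) / ((2 * n + 1) ^ 2 * (2 * n + 3) ^ 2)

lemma firstTerm_nonneg (n : ℕ) : 0 ≤ firstTerm n := by
  unfold firstTerm; positivity

lemma secondTerm_nonneg (n : ℕ) : 0 ≤ secondTerm n := by
  unfold secondTerm; positivity

lemma firstTerm_add_two_mul_secondTerm (n : ℕ) :
    firstTerm n + 2 * secondTerm n = tail n - tail (n + 1) := by
  have h₁ : (2 * (n : ℝ) + 1) ≠ 0 := by positivity
  have h₃ : (2 * (n : ℝ) + 3) ≠ 0 := by positivity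
  have h₅ : (2 * (n : ℝ) + 5) ≠ 0 := by positivity
  have e₁ : 2 * ((n : ℝ) + 1) - 1 = 2 * n + 1 := by ring
  have e₅ : 2 * ((n : ℝ) + 1) + 3 = 2 * n + 5 := by ring
  unfold firstTerm secondTerm tail
  push_cast
  rw [e₁, e₅]
  field_simp
  ring

lemma tail_antitone : Antitone tail :=
  antitone_nat_of_succ_le fun n ↦ by
    have := firstTerm_add_two_mul_secondTerm n
    linarith [firstTerm_nonneg n, secondTerm_nonneg n]

lemma tail_le_inv_succ (n : ℕ) : tail n ≤ 1 / ((n : ℝ) + 1) := by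
  unfold tail
  rw [div_le_div_iff₀ (by positivity) (by positivity)]
  nlinarith [sq_nonneg ((n : ℝ)), sq_nonneg ((n : ℝ) + 1), n.cast_nonneg (α := ℝ)]

lemma tendsto_tail_zero : Tendsto tail atTop (𝓝 0) :=
  squeeze_zero (fun n ↦ by unfold tail; positivity) tail_le_inv_succ
    tendsto_one_div_add_atTop_nhds_zero_nat

lemma hasSum_firstTerm_add_two_mul_secondTerm :
    HasSum (fun n ↦ firstTerm n + 2 * secondTerm n) (1 / 9) := by
  have h := hasSum_sub_succ_of_antitone tail_antitone tendsto_tail_zero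
  have tail_zero : tail 0 = 1 / 9 := by norm_num [tail]
  rw [tail_zero, sub_zero] at h
  simpa only [firstTerm_add_two_mul_secondTerm] using h

end Stmt13

open Stmt13 in
theorem stmt13 :
    (1 : ℝ) / 9
      = (∑' n : ℕ, (1 : ℝ) / ((2 * (n : ℝ) + 1) * (2 * n + 5) * (2 * n + 3) ^ 2))
        + 2 * (∑' n : ℕ, (1 : ℝ) /
            ((2 * (n + 1 : ℝ) - 1) ^ 2 * (2 * (n + 1 : ℝ) + 3) ^ 2)) := by
  have hS := hasSum_firstTerm_add_two_mul_secondTerm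
  have hfirst : Summable firstTerm :=
    hS.summable.of_nonneg_of_le firstTerm_nonneg fun n ↦ by
      linarith [secondTerm_nonneg n]
  have hsecond : Summable fun n ↦ 2 * secondTerm n :=
    hS.summable.of_nonneg_of_le (fun n ↦ by linarith [secondTerm_nonneg n]) fun n ↦ by
      linarith [firstTerm_nonneg n]
  change 1 / 9 = ∑' n, firstTerm n + 2 * ∑' n, secondTerm n
  rw [← hS.tsum_eq, hfirst.tsum_add hsecond, tsum_mul_left]
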